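/- arXiv:2602.08118 — 3 statements merged into one kernel-verified Lean document; each statement's English description precedes it below -/
import Mathlib

section
/- Under the semi-discrete assumptions (μ = Σ a_i δ_{x_i}, ν = Σ b_j δ_{y_j} discrete probability measures with positive weights, γ absolutely continuous on ℝ^d × ℝ^d), the superlevel set Z_K = {(α,β) ∈ ℝ^{n+m} : U(α,β) ≥ K} satisfies: Z_K ⊆ {(α,β) : -R ≤ min_i α_i + min_j β_j and max_i α_i + max_j β_j ≤ R} for some finite R depending on K, μ, ν, γ. Consequently, the image of Z_K in the quotient space ℝ^{n+m}/∼_⊕ is compact, where (α,β) ∼_⊕ (α',β') iff α_i + β_j = α'_i + β'_j for all i,j. -/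
open MeasureTheory
open scoped ENNReal

noncomputable section

/-- `f(x,α) = max_{1≤i≤n} (⟨x,x_i⟩ + α_i)`. -/
def fmax {d n : ℕ} (xs : Fin n → EuclideanSpace ℝ (Fin d))
    (x : EuclideanSpace ℝ (Fin d)) (α : Fin n → ℝ) : ℝ :=
  ⨆ i : Fin n, ((inner ℝ x (xs i) : ℝ) + α i)

/-- The finite-dimensional dual objective
`U(α,β) = Σ_i a_i(α_i + ½‖x_i‖²) + Σ_j b_j(β_j + ½‖y_j‖²)
          - ∫ exp(f(x,α)+g(y,β) - ½‖x‖² - ½‖y‖²) dγ + 1`. -/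
def Udual {d n m : ℕ} (xs : Fin n → EuclideanSpace ℝ (Fin d))
    (ys : Fin m → EuclideanSpace ℝ (Fin d)) (a : Fin n → ℝ) (b : Fin m → ℝ)
    (γ : Measure (EuclideanSpace ℝ (Fin d) × EuclideanSpace ℝ (Fin d)))
    (α : Fin n → ℝ) (β : Fin m → ℝ) : ℝ :=
  ∑ i, a i * (α i + ‖xs i‖ ^ 2 / 2) + ∑ j, b j * (β j + ‖ys j‖ ^ 2 / 2)
    - ∫ p, Real.exp (fmax xs p.1 α + fmax ys p.2 β - ‖p.1‖ ^ 2 / 2 - ‖p.2‖ ^ 2 / 2) ∂γ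
    + 1

/-!
Let `ε > 0` be the smallest weight. The average `Σ a_i α_i` gives weight at least `ε` to
`min α`, so the linear part of `U` is at most `ε (min α + min β) + (1 - ε) (max α + max β) + C`.
Since `f(x, α) ≥ max α - ‖x‖ max_i ‖x_i‖`, the integral is at least `c exp (max α + max β)` for
some `c > 0`. On `Z_K` the exponential must therefore stay below a linear function, which bounds
`max α + max β` from above, and then `min α + min β` from below.
`U` is continuous and invariant under `(α, β) ↦ (α + r, β - r)`, so the image of `Z_K` in the
quotient is the continuous image of its representatives normalized by `α_{i₀} = 0`, a closed
and bounded set.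
-/

open Set Filter Topology

lemma add_mem_Icc_ciInf_add_ciSup {ι κ : Type*} [Finite ι] [Finite κ] (α : ι → ℝ) (β : κ → ℝ)
    (i : ι) (j : κ) : α i + β j ∈ Icc ((⨅ i, α i) + ⨅ j, β j) ((⨆ i, α i) + ⨆ j, β j) :=
  ⟨add_le_add (ciInf_le (Finite.bddBelow_range α) i) (ciInf_le (Finite.bddBelow_range β) j),
    add_le_add (le_ciSup (Finite.bddAbove_range α) i) (le_ciSup (Finite.bddAbove_range β) j)⟩

lemma exists_bound_of_le_affine_sub_exp {K ε C c : ℝ} (hε : 0 < ε) (hε1 : ε ≤ 1) (hc : 0 < c) :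
    ∃ R, ∀ s t : ℝ, t ≤ s → K ≤ ε * t + (1 - ε) * s + C - c * Real.exp s →
      -R ≤ t ∧ s ≤ R := by
  set A := Real.log (2 / c)
  set S := C + 2 * A - 2 - K
  set T := (C + (1 - ε) * S - K) / ε
  refine ⟨max S T, fun s t hts hK => ?_⟩
  -- `c eˢ = 2 e^(s - A)`, and the tangent line of `exp` at `A` turns this into a linear bound.
  have hexp : 2 * (s - A + 1) ≤ c * Real.exp s := by
    have : c * Real.exp s = 2 * Real.exp (s - A) := by
      rw [Real.exp_sub, Real.exp_log (by positivity)]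
      field_simp
    linarith [Real.add_one_le_exp (s - A)]
  have hs : s ≤ S := by nlinarith
  have ht : ε * -T ≤ ε * t := by
    have : ε * -T = K - C - (1 - ε) * S := by
      simp only [T]
      field_simp
      ring
    nlinarith [Real.exp_pos s]
  exact ⟨(neg_le_neg (le_max_right S T)).trans (le_of_mul_le_mul_left ht hε),
    hs.trans (le_max_left S T)⟩

lemma isCompact_image_of_section {X Y : Type*} [TopologicalSpace X] [TopologicalSpace Y]
    {Φ : X → Y} {Ψ : Y → X} {Z : Set X} {B : Set Y} (hΦ : Continuous Φ) (hΨ : Continuous Ψ)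
    (hZ : IsClosed Z) (hB : IsCompact B) (hZB : MapsTo Φ Z B) (hΦΨ : ∀ x, Φ (Ψ (Φ x)) = Φ x)
    (hsat : ∀ x ∈ Z, ∀ x', Φ x' = Φ x → x' ∈ Z) :
    IsCompact (Φ '' Z) := by
  have hsec : Φ '' Z = Φ '' (Z ∩ Ψ '' B) := by
    refine (image_mono inter_subset_left).antisymm' ?_
    rintro _ ⟨x, hx, rfl⟩
    exact ⟨Ψ (Φ x), ⟨hsat x hx _ (hΦΨ x), mem_image_of_mem Ψ (hZB hx)⟩, hΦΨ x⟩
  rw [hsec]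
  exact ((hB.image hΨ).inter_left hZ).image hΦ

section FiniteSup

variable {ι : Type*} [Fintype ι] [Nonempty ι]

lemma sum_mul_le_ciInf_ciSup_combination {a α : ι → ℝ} {ε : ℝ} (hε : 0 ≤ ε)
    (ha : ∀ i, ε ≤ a i) (hsa : ∑ i, a i = 1) :
    ∑ i, a i * α i ≤ ε * (⨅ i, α i) + (1 - ε) * ⨆ i, α i := by
  obtain ⟨i₀, hi₀⟩ := exists_eq_ciInf_of_finite (f := α)
  set M := ⨆ i, α i
  have hM i : α i ≤ M := le_ciSup (Finite.bddAbove_range α) i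
  have hgap : a i₀ * (M - α i₀) ≤ ∑ i, a i * (M - α i) :=
    Finset.single_le_sum (fun i _ => mul_nonneg (hε.trans (ha i)) (sub_nonneg.2 (hM i)))
      (Finset.mem_univ i₀)
  have hsum : ∑ i, a i * (M - α i) = M - ∑ i, a i * α i := by
    simp only [mul_sub, Finset.sum_sub_distrib, ← Finset.sum_mul, hsa, one_mul]
  have hmin := mul_le_mul_of_nonneg_right (ha i₀) (sub_nonneg.2 (hM i₀))
  rw [← hi₀]
  linarith

lemma continuous_ciSup_apply : Continuous fun v : ι → ℝ => ⨆ i, v i := by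
  simp only [← Finset.sup'_univ_eq_ciSup]
  exact Continuous.finset_sup'_apply Finset.univ_nonempty fun i _ => continuous_apply i

end FiniteSup

section Fmax

variable {d n : ℕ} [Nonempty (Fin n)] (xs : Fin n → EuclideanSpace ℝ (Fin d))

lemma fmax_add_const (x : EuclideanSpace ℝ (Fin d)) (α : Fin n → ℝ) (r : ℝ) :
    fmax xs x (fun i => α i + r) = fmax xs x α + r := by
  simpa only [fmax, add_assoc, OrderIso.addRight_apply] using
    ((OrderIso.addRight r).map_ciSup
      (Finite.bddAbove_range fun i => (inner ℝ x (xs i) : ℝ) + α i)).symm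

lemma fmax_le (x : EuclideanSpace ℝ (Fin d)) (α : Fin n → ℝ) :
    fmax xs x α ≤ ‖x‖ * (⨆ i, ‖xs i‖) + ⨆ i, α i :=
  ciSup_le fun i => add_le_add
    ((real_inner_le_norm x (xs i)).trans (mul_le_mul_of_nonneg_left
      (le_ciSup (Finite.bddAbove_range fun i => ‖xs i‖) i) (norm_nonneg x)))
    (le_ciSup (Finite.bddAbove_range α) i)

lemma le_fmax (x : EuclideanSpace ℝ (Fin d)) (α : Fin n → ℝ) :
    (⨆ i, α i) - ‖x‖ * (⨆ i, ‖xs i‖) ≤ fmax xs x α := by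
  obtain ⟨i, hi⟩ := exists_eq_ciSup_of_finite (f := α)
  have hinner : -(‖x‖ * ‖xs i‖) ≤ inner ℝ x (xs i) :=
    neg_le_of_abs_le (abs_real_inner_le_norm x (xs i))
  have hnorm : ‖x‖ * ‖xs i‖ ≤ ‖x‖ * ⨆ i, ‖xs i‖ :=
    mul_le_mul_of_nonneg_left (le_ciSup (Finite.bddAbove_range fun i => ‖xs i‖) i) (norm_nonneg x)
  calc (⨆ i, α i) - ‖x‖ * (⨆ i, ‖xs i‖) ≤ inner ℝ x (xs i) + α i := by linarith
    _ ≤ fmax xs x α :=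
      le_ciSup (Finite.bddAbove_range fun i => (inner ℝ x (xs i) : ℝ) + α i) i

@[fun_prop]
lemma Continuous.fmax {T : Type*} [TopologicalSpace T] {f : T → EuclideanSpace ℝ (Fin d)}
    {g : T → Fin n → ℝ} (hf : Continuous f) (hg : Continuous g) :
    Continuous fun t => fmax xs (f t) (g t) := by
  simp only [_root_.fmax, ← Finset.sup'_univ_eq_ciSup]
  exact Continuous.finset_sup'_apply Finset.univ_nonempty fun i _ =>
    (hf.inner continuous_const).add ((continuous_apply i).comp hg)

end Fmax

def dualIntegrand {d n m : ℕ} (xs : Fin n → EuclideanSpace ℝ (Fin d))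
    (ys : Fin m → EuclideanSpace ℝ (Fin d)) (α : Fin n → ℝ) (β : Fin m → ℝ)
    (p : EuclideanSpace ℝ (Fin d) × EuclideanSpace ℝ (Fin d)) : ℝ :=
  Real.exp (fmax xs p.1 α + fmax ys p.2 β - ‖p.1‖ ^ 2 / 2 - ‖p.2‖ ^ 2 / 2)

lemma dualIntegrand_pos {d n m : ℕ} (xs : Fin n → EuclideanSpace ℝ (Fin d))
    (ys : Fin m → EuclideanSpace ℝ (Fin d)) (α : Fin n → ℝ) (β : Fin m → ℝ)
    (p : EuclideanSpace ℝ (Fin d) × EuclideanSpace ℝ (Fin d)) :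
    0 < dualIntegrand xs ys α β p :=
  Real.exp_pos _

section DualIntegrand

variable {d n m : ℕ} [Nonempty (Fin n)] [Nonempty (Fin m)]
  (xs : Fin n → EuclideanSpace ℝ (Fin d)) (ys : Fin m → EuclideanSpace ℝ (Fin d))
  (γ : Measure (EuclideanSpace ℝ (Fin d) × EuclideanSpace ℝ (Fin d)))

lemma continuous_dualIntegrand :
    Continuous fun z : ((Fin n → ℝ) × (Fin m → ℝ)) ×
        (EuclideanSpace ℝ (Fin d) × EuclideanSpace ℝ (Fin d)) =>
      dualIntegrand xs ys z.1.1 z.1.2 z.2 := by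
  unfold dualIntegrand
  fun_prop

-- `‖x‖ X - ‖x‖² / 2 ≤ X² / 2` absorbs the linear growth of `fmax` into the Gaussian factor.
lemma dualIntegrand_le (α : Fin n → ℝ) (β : Fin m → ℝ)
    (p : EuclideanSpace ℝ (Fin d) × EuclideanSpace ℝ (Fin d)) :
    dualIntegrand xs ys α β p ≤ Real.exp
      ((⨆ i, ‖xs i‖) ^ 2 / 2 + (⨆ j, ‖ys j‖) ^ 2 / 2 + (⨆ i, α i) + ⨆ j, β j) := by
  refine Real.exp_le_exp.2 ?_
  nlinarith [fmax_le xs p.1 α, fmax_le ys p.2 β,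
    sq_nonneg (‖p.1‖ - ⨆ i, ‖xs i‖), sq_nonneg (‖p.2‖ - ⨆ j, ‖ys j‖)]

lemma integrable_dualIntegrand [IsFiniteMeasure γ] (α : Fin n → ℝ) (β : Fin m → ℝ) :
    Integrable (dualIntegrand xs ys α β) γ :=
  (integrable_const _).mono'
    ((continuous_dualIntegrand xs ys).comp (Continuous.prodMk_right (α, β))).aestronglyMeasurable
    (ae_of_all _ fun p => by
      rw [Real.norm_eq_abs, abs_of_pos (dualIntegrand_pos xs ys α β p)]
      exact dualIntegrand_le xs ys α β p)

lemma continuous_integral_dualIntegrand [IsFiniteMeasure γ] :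
    Continuous fun q : (Fin n → ℝ) × (Fin m → ℝ) => ∫ p, dualIntegrand xs ys q.1 q.2 p ∂γ := by
  have hsup : Continuous fun q : (Fin n → ℝ) × (Fin m → ℝ) => (⨆ i, q.1 i) + ⨆ j, q.2 j :=
    (continuous_ciSup_apply.comp continuous_fst).add (continuous_ciSup_apply.comp continuous_snd)
  refine continuous_iff_continuousAt.2 fun q₀ => ?_
  have hnear : ∀ᶠ q in 𝓝 q₀, (⨆ i, q.1 i) + (⨆ j, q.2 j) < (⨆ i, q₀.1 i) + (⨆ j, q₀.2 j) + 1 :=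
    hsup.continuousAt.eventually_lt continuousAt_const (lt_add_one _)
  refine continuousAt_of_dominated (bound := fun _ => Real.exp ((⨆ i, ‖xs i‖) ^ 2 / 2
      + (⨆ j, ‖ys j‖) ^ 2 / 2 + ((⨆ i, q₀.1 i) + (⨆ j, q₀.2 j) + 1)))
    (Eventually.of_forall fun q => ((continuous_dualIntegrand xs ys).comp
      (Continuous.prodMk_right q)).aestronglyMeasurable) ?_ (integrable_const _)
    (ae_of_all _ fun p => ((continuous_dualIntegrand xs ys).comp
      (Continuous.prodMk_left p)).continuousAt)
  filter_upwards [hnear] with q hq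
  refine ae_of_all _ fun p => ?_
  rw [Real.norm_eq_abs, abs_of_pos (dualIntegrand_pos xs ys q.1 q.2 p)]
  exact (dualIntegrand_le xs ys q.1 q.2 p).trans (Real.exp_le_exp.2 (by linarith))

lemma exists_pos_mul_exp_le_integral_dualIntegrand [IsFiniteMeasure γ] [NeZero γ] :
    ∃ c > 0, ∀ (α : Fin n → ℝ) (β : Fin m → ℝ),
      c * Real.exp ((⨆ i, α i) + ⨆ j, β j) ≤ ∫ p, dualIntegrand xs ys α β p ∂γ := by
  set X := ⨆ i, ‖xs i‖
  set Y := ⨆ j, ‖ys j‖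
  set w : EuclideanSpace ℝ (Fin d) × EuclideanSpace ℝ (Fin d) → ℝ := fun p =>
    Real.exp (-(‖p.1‖ * X) - ‖p.2‖ * Y - ‖p.1‖ ^ 2 / 2 - ‖p.2‖ ^ 2 / 2)
  have hX : 0 ≤ X := (norm_nonneg _).trans
    (le_ciSup (Finite.bddAbove_range fun i => ‖xs i‖) (Classical.arbitrary _))
  have hY : 0 ≤ Y := (norm_nonneg _).trans
    (le_ciSup (Finite.bddAbove_range fun j => ‖ys j‖) (Classical.arbitrary _))
  have hw_int : Integrable w γ := by
    refine (integrable_const (1 : ℝ)).mono' (by fun_prop) (ae_of_all _ fun p => ?_)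
    rw [Real.norm_eq_abs, abs_of_pos (Real.exp_pos _), Real.exp_le_one_iff]
    nlinarith [mul_nonneg (norm_nonneg p.1) hX, mul_nonneg (norm_nonneg p.2) hY,
      sq_nonneg ‖p.1‖, sq_nonneg ‖p.2‖]
  refine ⟨∫ p, w p ∂γ, integral_exp_pos hw_int, fun α β => ?_⟩
  rw [← integral_mul_const]
  refine integral_mono (hw_int.mul_const _) (integrable_dualIntegrand xs ys γ α β) fun p => ?_
  rw [← Real.exp_add]
  exact Real.exp_le_exp.2 (by linarith [le_fmax xs p.1 α, le_fmax ys p.2 β])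

end DualIntegrand

section Udual

variable {d n m : ℕ} (xs : Fin n → EuclideanSpace ℝ (Fin d))
  (ys : Fin m → EuclideanSpace ℝ (Fin d)) (a : Fin n → ℝ) (b : Fin m → ℝ)
  (γ : Measure (EuclideanSpace ℝ (Fin d) × EuclideanSpace ℝ (Fin d)))

lemma Udual_eq (α : Fin n → ℝ) (β : Fin m → ℝ) :
    Udual xs ys a b γ α β = ∑ i, a i * (α i + ‖xs i‖ ^ 2 / 2)
      + ∑ j, b j * (β j + ‖ys j‖ ^ 2 / 2) - ∫ p, dualIntegrand xs ys α β p ∂γ + 1 :=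
  rfl

variable [Nonempty (Fin n)] [Nonempty (Fin m)]

lemma continuous_Udual [IsFiniteMeasure γ] :
    Continuous fun q : (Fin n → ℝ) × (Fin m → ℝ) => Udual xs ys a b γ q.1 q.2 := by
  simp only [Udual_eq]
  have := continuous_integral_dualIntegrand xs ys γ
  fun_prop

lemma Udual_shift (hsa : ∑ i, a i = 1) (hsb : ∑ j, b j = 1) (α : Fin n → ℝ) (β : Fin m → ℝ)
    (r : ℝ) : Udual xs ys a b γ (fun i => α i + r) (fun j => β j - r) = Udual xs ys a b γ α β := by
  have hint : dualIntegrand xs ys (fun i => α i + r) (fun j => β j - r) =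
      dualIntegrand xs ys α β := by
    ext p
    simp only [dualIntegrand, sub_eq_add_neg, fmax_add_const]
    ring_nf
  have hlin {k : ℕ} (w : Fin k → ℝ) (hw : ∑ i, w i = 1) (v c : Fin k → ℝ) (s : ℝ) :
      ∑ i, w i * (v i + s + c i) = ∑ i, w i * (v i + c i) + s := by
    simp only [add_right_comm _ s, mul_add, Finset.sum_add_distrib, ← Finset.sum_mul, hw, one_mul]
  rw [Udual_eq, Udual_eq, hint, hlin a hsa]
  simp only [sub_eq_add_neg (β _), hlin b hsb]
  ring

lemma Udual_eq_of_add_eq (hsa : ∑ i, a i = 1) (hsb : ∑ j, b j = 1) {α α' : Fin n → ℝ}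
    {β β' : Fin m → ℝ} (h : ∀ i j, α' i + β' j = α i + β j) :
    Udual xs ys a b γ α' β' = Udual xs ys a b γ α β := by
  obtain ⟨i₀⟩ := ‹Nonempty (Fin n)›
  obtain ⟨j₀⟩ := ‹Nonempty (Fin m)›
  have hα : α' = fun i => α i + (α' i₀ - α i₀) := by
    ext i
    linarith [h i j₀, h i₀ j₀]
  have hβ : β' = fun j => β j - (α' i₀ - α i₀) := by
    ext j
    linarith [h i₀ j]
  rw [hα, hβ, Udual_shift xs ys a b γ hsa hsb]

lemma exists_Udual_le [IsFiniteMeasure γ] [NeZero γ] (ha : ∀ i, 0 < a i) (hb : ∀ j, 0 < b j)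
    (hsa : ∑ i, a i = 1) (hsb : ∑ j, b j = 1) :
    ∃ ε c C : ℝ, 0 < ε ∧ ε ≤ 1 ∧ 0 < c ∧ ∀ α β, Udual xs ys a b γ α β ≤
      ε * ((⨅ i, α i) + ⨅ j, β j) + (1 - ε) * ((⨆ i, α i) + ⨆ j, β j) + C
        - c * Real.exp ((⨆ i, α i) + ⨆ j, β j) := by
  obtain ⟨c, hc, hI⟩ := exists_pos_mul_exp_le_integral_dualIntegrand xs ys γ
  obtain ⟨i₀, hi₀⟩ := exists_eq_ciInf_of_finite (f := a)
  obtain ⟨j₀, hj₀⟩ := exists_eq_ciInf_of_finite (f := b)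
  set ε := min (⨅ i, a i) (⨅ j, b j)
  have hε : 0 < ε := lt_min (hi₀ ▸ ha i₀) (hj₀ ▸ hb j₀)
  have hεa i : ε ≤ a i := (min_le_left _ _).trans (ciInf_le (Finite.bddBelow_range a) i)
  have hεb j : ε ≤ b j := (min_le_right _ _).trans (ciInf_le (Finite.bddBelow_range b) j)
  have hε1 : ε ≤ 1 := (hεa i₀).trans
    (hsa ▸ Finset.single_le_sum (fun i _ => (ha i).le) (Finset.mem_univ i₀))
  refine ⟨ε, c, ∑ i, a i * (‖xs i‖ ^ 2 / 2) + ∑ j, b j * (‖ys j‖ ^ 2 / 2) + 1,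
    hε, hε1, hc, fun α β => ?_⟩
  have hα := sum_mul_le_ciInf_ciSup_combination (α := α) hε.le hεa hsa
  have hβ := sum_mul_le_ciInf_ciSup_combination (α := β) hε.le hεb hsb
  rw [Udual_eq]
  simp only [mul_add, Finset.sum_add_distrib]
  linarith [hI α β]

end Udual

/-- The quotient `ℝ^{n+m}/∼_⊕` is realized as the image of the map `(α,β) ↦ (α_i + β_j)_{i,j}`. -/
theorem superlevel_set_bounded_and_quotient_compact_general
    {d n m : ℕ} (hn : 0 < n) (hm : 0 < m)
    (xs : Fin n → EuclideanSpace ℝ (Fin d)) (ys : Fin m → EuclideanSpace ℝ (Fin d))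
    (a : Fin n → ℝ) (b : Fin m → ℝ)
    (ha : ∀ i, 0 < a i) (hb : ∀ j, 0 < b j)
    (hsa : ∑ i, a i = 1) (hsb : ∑ j, b j = 1)
    (γ : Measure (EuclideanSpace ℝ (Fin d) × EuclideanSpace ℝ (Fin d)))
    [IsProbabilityMeasure γ] (K : ℝ) :
    ∃ R : ℝ,
      (∀ q : (Fin n → ℝ) × (Fin m → ℝ), K ≤ Udual xs ys a b γ q.1 q.2 →
        (-R ≤ (⨅ i, q.1 i) + (⨅ j, q.2 j)) ∧ ((⨆ i, q.1 i) + (⨆ j, q.2 j) ≤ R)) ∧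
      IsCompact
        ((fun q : (Fin n → ℝ) × (Fin m → ℝ) =>
            (fun ij : Fin n × Fin m => q.1 ij.1 + q.2 ij.2)) ''
          {q | K ≤ Udual xs ys a b γ q.1 q.2}) := by
  have : Nonempty (Fin n) := Fin.pos_iff_nonempty.mp hn
  have : Nonempty (Fin m) := Fin.pos_iff_nonempty.mp hm
  obtain ⟨i₀⟩ := ‹Nonempty (Fin n)›
  obtain ⟨j₀⟩ := ‹Nonempty (Fin m)›
  obtain ⟨ε, c, C, hε, hε1, hc, hU⟩ := exists_Udual_le xs ys a b γ ha hb hsa hsb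
  obtain ⟨R, hR⟩ := exists_bound_of_le_affine_sub_exp (K := K) (C := C) hε hε1 hc
  have hbound (q : (Fin n → ℝ) × (Fin m → ℝ)) (hq : K ≤ Udual xs ys a b γ q.1 q.2) :
      -R ≤ (⨅ i, q.1 i) + (⨅ j, q.2 j) ∧ (⨆ i, q.1 i) + (⨆ j, q.2 j) ≤ R :=
    have hIcc := add_mem_Icc_ciInf_add_ciSup q.1 q.2 i₀ j₀
    hR _ _ (hIcc.1.trans hIcc.2) (hq.trans (hU _ _))
  refine ⟨R, hbound, ?_⟩
  -- Normalizing `α i₀ = 0` gives a continuous section of `(α, β) ↦ (α_i + β_j)_{i,j}`.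
  refine isCompact_image_of_section (by fun_prop)
    (Ψ := fun z => (fun i => z (i, j₀) - z (i₀, j₀), fun j => z (i₀, j))) (by fun_prop)
    (isClosed_le continuous_const (continuous_Udual xs ys a b γ))
    (isCompact_univ_pi fun _ => isCompact_Icc (a := -R) (b := R))
    (fun q hq ij _ => Icc_subset_Icc (hbound q hq).1 (hbound q hq).2
      (add_mem_Icc_ciInf_add_ciSup q.1 q.2 ij.1 ij.2))
    (fun q => funext fun ij => by simp only; ring)
    (fun q hq q' hq' => le_of_le_of_eq hq
      (Udual_eq_of_add_eq xs ys a b γ hsa hsb fun i j => congrFun hq' (i, j)).symm)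

/-- the superlevel set `Z_K = {(α,β) : U(α,β) ≥ K}` is contained in
`{-R ≤ min α + min β, max α + max β ≤ R}` for some finite `R`, and its image in the
quotient `ℝ^{n+m}/∼_⊕` — realized as the image of the map `(α,β) ↦ (α_i + β_j)_{i,j}`,
which identifies the quotient — is compact. -/
theorem superlevel_set_bounded_and_quotient_compact
    {d n m : ℕ} (hn : 0 < n) (hm : 0 < m)
    (xs : Fin n → EuclideanSpace ℝ (Fin d)) (ys : Fin m → EuclideanSpace ℝ (Fin d))
    (a : Fin n → ℝ) (b : Fin m → ℝ)
    (ha : ∀ i, 0 < a i) (hb : ∀ j, 0 < b j)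
    (hsa : ∑ i, a i = 1) (hsb : ∑ j, b j = 1)
    (γ : Measure (EuclideanSpace ℝ (Fin d) × EuclideanSpace ℝ (Fin d)))
    [IsProbabilityMeasure γ] (hac : γ ≪ volume) (K : ℝ) :
    ∃ R : ℝ,
      (∀ q : (Fin n → ℝ) × (Fin m → ℝ), K ≤ Udual xs ys a b γ q.1 q.2 →
        (-R ≤ (⨅ i, q.1 i) + (⨅ j, q.2 j)) ∧ ((⨆ i, q.1 i) + (⨆ j, q.2 j) ≤ R)) ∧
      IsCompact
        ((fun q : (Fin n → ℝ) × (Fin m → ℝ) =>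
            (fun ij : Fin n × Fin m => q.1 ij.1 + q.2 ij.2)) ''
          {q | K ≤ Udual xs ys a b γ q.1 q.2}) :=
  superlevel_set_bounded_and_quotient_compact_general hn hm xs ys a b ha hb hsa hsb γ K

end
end

section
/- Let μ = Σ a_i δ_{x_i}, ν = Σ b_j δ_{y_j} be discrete probability measures with positive weights on a Polish space, and σ = Σ_{i,j} σ_{ij} δ_{(x_i,y_j)} a positive measure with all σ_{ij} > 0. Then the Schrödinger system a_i = Σ_j σ_{ij} exp(p_i + q_j) for all i, b_j = Σ_i σ_{ij} exp(p_i + q_j) for all j, admits a solution (p,q) ∈ ℝ^n × ℝ^m, unique up to the shift (p,q) ↦ (p + r𝟏, q - r𝟏). Moreover the unique minimizer of H(π|σ) over π ∈ Π(μ,ν) is π* = Σ_{i,j} σ_{ij} exp(p_i + q_j) δ_{(x_i,y_j)}. -/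
noncomputable section

/-- A discrete coupling of the weight vectors `a` and `b`. -/
def IsCoupling {n m : ℕ} (a : Fin n → ℝ) (b : Fin m → ℝ)
    (π : Fin n → Fin m → ℝ) : Prop :=
  (∀ i j, 0 ≤ π i j) ∧ (∀ i, ∑ j, π i j = a i) ∧ (∀ j, ∑ i, π i j = b j)

/-- Discrete relative entropy `H(π|σ) = Σ_{i,j} π_{ij} log(π_{ij}/σ_{ij})`. -/
def dEnt {n m : ℕ} (π σ : Fin n → Fin m → ℝ) : ℝ :=
  ∑ i, ∑ j, π i j * Real.log (π i j / σ i j)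

/-! The potentials minimize the convex dual function
`Φ(p, q) = Σ σᵢⱼ exp (pᵢ + qⱼ) - Σ aᵢ pᵢ - Σ bⱼ qⱼ`. It is invariant under
`(p, q) ↦ (p + r, q - r)`, and since `Σ aᵢ pᵢ + Σ bⱼ qⱼ = Σ aᵢ bⱼ (pᵢ + qⱼ)` each summand
`σᵢⱼ exp x - aᵢ bⱼ x` is coercive in `x = pᵢ + qⱼ`; so `Φ` attains its minimum on the compact
slice `q j₀ = 0` of a sublevel set. The Sinkhorn row scaling `pᵢ ↦ pᵢ + log (aᵢ / rᵢ)`, where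
`rᵢ` are the current row sums, lowers `Φ` by `Σ rᵢ klFun (aᵢ / rᵢ)`, which vanishes only when
`rᵢ = aᵢ`; hence at a minimizer the row sums (and, by transposition, the column sums) are right.
For couplings `π` and the Gibbs plan `R = σ exp (p + q)` one has
`H(π|σ) = H(R|σ) + Σ Rᵢⱼ klFun (πᵢⱼ / Rᵢⱼ)`, which gives the strict minimality of `R` and,
applied to two solutions, their equality up to the shift. -/

section

open Real Finset InformationTheory

lemma mul_klFun_div {x r : ℝ} (hr : r ≠ 0) : r * klFun (x / r) = x * log (x / r) + r - x := by
  rw [klFun_apply]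
  field_simp

lemma exists_mul_abs_le_mul_exp_sub {s c : ℝ} (hs : 0 < s) (hc : 0 < c) :
    ∃ K, ∀ x, c * |x| ≤ s * exp x - c * x + K := by
  refine ⟨2 * c * |log (2 * c / s)|, fun x => ?_⟩
  have hK : 0 ≤ 2 * c * |log (2 * c / s)| := by positivity
  rcases le_or_gt 0 x with hx | hx
  · -- `e^y ≥ 1 + y` at `y = x - log (2c/s)`
    have hexp := add_one_le_exp (x - log (2 * c / s))
    rw [exp_sub, exp_log (by positivity), div_div_eq_mul_div, le_div_iff₀ (by positivity)] at hexp
    have hlog := mul_le_mul_of_nonneg_left (le_abs_self (log (2 * c / s))) (by positivity : 0 ≤ c)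
    rw [abs_of_nonneg hx]
    nlinarith
  · rw [abs_of_neg hx]
    nlinarith [exp_pos x]

lemma exists_shift_of_add_eq {ι κ : Type*} [Nonempty ι] [Nonempty κ] {p p' : ι → ℝ} {q q' : κ → ℝ}
    (h : ∀ i j, p' i + q' j = p i + q j) : ∃ r, (∀ i, p' i = p i + r) ∧ ∀ j, q' j = q j - r := by
  obtain ⟨i₀⟩ := ‹Nonempty ι›
  obtain ⟨j₀⟩ := ‹Nonempty κ›
  refine ⟨p' i₀ - p i₀, fun i => ?_, fun j => ?_⟩
  · linarith [h i j₀, h i₀ j₀]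
  · linarith [h i₀ j]

variable {ι κ : Type*} [Fintype ι] [Fintype κ]

def schrodingerDual (a : ι → ℝ) (b : κ → ℝ) (σ : ι → κ → ℝ) (p : ι → ℝ) (q : κ → ℝ) : ℝ :=
  ∑ i, ∑ j, σ i j * exp (p i + q j) - ∑ i, a i * p i - ∑ j, b j * q j

variable {a : ι → ℝ} {b : κ → ℝ} {σ : ι → κ → ℝ}

lemma schrodingerDual_transpose (p : ι → ℝ) (q : κ → ℝ) :
    schrodingerDual a b σ p q = schrodingerDual b a (fun j i => σ i j) q p := by
  simp only [schrodingerDual, add_comm (q _)]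
  rw [sum_comm]
  ring

lemma schrodingerDual_shift (hab : ∑ i, a i = ∑ j, b j) (p : ι → ℝ) (q : κ → ℝ) (r : ℝ) :
    schrodingerDual a b σ (fun i => p i + r) (fun j => q j - r) = schrodingerDual a b σ p q := by
  have hexp : ∀ i j, p i + r + (q j - r) = p i + q j := fun i j => by ring
  simp only [schrodingerDual, hexp, mul_add, mul_sub, sum_add_distrib, sum_sub_distrib, ← sum_mul,
    hab]
  ring

lemma schrodingerDual_eq_sum (hsa : ∑ i, a i = 1) (hsb : ∑ j, b j = 1) (p : ι → ℝ) (q : κ → ℝ) :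
    schrodingerDual a b σ p q =
      ∑ i, ∑ j, (σ i j * exp (p i + q j) - a i * b j * (p i + q j)) := by
  have hweights : ∑ i, ∑ j, a i * b j * (p i + q j) = ∑ i, a i * p i + ∑ j, b j * q j := by
    simp only [mul_add, sum_add_distrib, ← sum_mul, ← mul_sum, hsb, mul_one]
    rw [sum_comm]
    simp only [mul_comm (a _), mul_assoc, ← mul_sum, hsa, mul_one]
  rw [schrodingerDual, sub_sub, ← hweights]
  simp only [sum_sub_distrib]

lemma schrodingerDual_rowScaling (ha : ∀ i, 0 < a i) (p : ι → ℝ) (q : κ → ℝ)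
    {r : ι → ℝ} (hr : ∀ i, r i = ∑ j, σ i j * exp (p i + q j)) (hr_pos : ∀ i, 0 < r i) :
    schrodingerDual a b σ (fun i => p i + log (a i / r i)) q
      = schrodingerDual a b σ p q - ∑ i, r i * klFun (a i / r i) := by
  have hscaled : ∀ i, ∑ j, σ i j * exp (p i + log (a i / r i) + q j) = a i := fun i => by
    simp only [add_right_comm _ (log _), exp_add (_ + _), exp_log (div_pos (ha i) (hr_pos i)),
      ← mul_assoc, ← sum_mul, ← hr, mul_div_cancel₀ _ (hr_pos i).ne']
  simp only [schrodingerDual, hscaled, ← hr, mul_klFun_div (hr_pos _).ne', mul_add,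
    sum_add_distrib, sum_sub_distrib]
  ring

lemma eq_rowSum_of_forall_schrodingerDual_le [Nonempty κ] (ha : ∀ i, 0 < a i)
    (hσ : ∀ i j, 0 < σ i j) {p : ι → ℝ} {q : κ → ℝ}
    (hmin : ∀ p' q', schrodingerDual a b σ p q ≤ schrodingerDual a b σ p' q') (i : ι) :
    a i = ∑ j, σ i j * exp (p i + q j) := by
  set r : ι → ℝ := fun i => ∑ j, σ i j * exp (p i + q j)
  have hr_pos : ∀ i, 0 < r i := fun i =>
    sum_pos (fun j _ => mul_pos (hσ i j) (exp_pos _)) univ_nonempty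
  have hterm_nonneg : ∀ i ∈ univ, 0 ≤ r i * klFun (a i / r i) := fun i _ =>
    mul_nonneg (hr_pos i).le (klFun_nonneg (div_pos (ha i) (hr_pos i)).le)
  have hdecrease := schrodingerDual_rowScaling (b := b) ha p q (fun i => rfl) hr_pos
  have hzero : ∑ i, r i * klFun (a i / r i) = 0 :=
    le_antisymm (by linarith [hmin (fun i => p i + log (a i / r i)) q]) (sum_nonneg hterm_nonneg)
  have hkl := (sum_eq_zero_iff_of_nonneg hterm_nonneg).1 hzero i (mem_univ i)
  rw [mul_eq_zero, or_iff_right (hr_pos i).ne', klFun_eq_zero_iff (div_pos (ha i) (hr_pos i)).le,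
    div_eq_one_iff_eq (hr_pos i).ne'] at hkl
  exact hkl

lemma eq_colSum_of_forall_schrodingerDual_le [Nonempty ι] (hb : ∀ j, 0 < b j)
    (hσ : ∀ i j, 0 < σ i j) {p : ι → ℝ} {q : κ → ℝ}
    (hmin : ∀ p' q', schrodingerDual a b σ p q ≤ schrodingerDual a b σ p' q') (j : κ) :
    b j = ∑ i, σ i j * exp (p i + q j) := by
  simp only [schrodingerDual_transpose (a := a)] at hmin
  simpa only [add_comm (q j)] using
    eq_rowSum_of_forall_schrodingerDual_le hb (fun j i => hσ i j) (fun q' p' => hmin p' q') j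

lemma exists_mul_abs_add_le_schrodingerDual (ha : ∀ i, 0 < a i) (hb : ∀ j, 0 < b j)
    (hσ : ∀ i j, 0 < σ i j) (hsa : ∑ i, a i = 1) (hsb : ∑ j, b j = 1) :
    ∃ K, ∀ p q i j, a i * b j * |p i + q j| ≤ schrodingerDual a b σ p q + K := by
  choose K hK using fun i j => exists_mul_abs_le_mul_exp_sub (hσ i j) (mul_pos (ha i) (hb j))
  refine ⟨∑ i, ∑ j, K i j, fun p q i j => ?_⟩
  have hnonneg : ∀ i j, 0 ≤ a i * b j * |p i + q j| := fun i j =>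
    mul_nonneg (mul_pos (ha i) (hb j)).le (abs_nonneg _)
  calc a i * b j * |p i + q j|
      ≤ ∑ j', a i * b j' * |p i + q j'| :=
        single_le_sum (fun j' _ => hnonneg i j') (mem_univ j)
    _ ≤ ∑ i', ∑ j', a i' * b j' * |p i' + q j'| :=
        single_le_sum (fun i' _ => sum_nonneg fun j' _ => hnonneg i' j') (mem_univ i)
    _ ≤ ∑ i', ∑ j', (σ i' j' * exp (p i' + q j') - a i' * b j' * (p i' + q j') + K i' j') :=
        sum_le_sum fun i' _ => sum_le_sum fun j' _ => hK i' j' _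
    _ = schrodingerDual a b σ p q + ∑ i, ∑ j, K i j := by
        simp only [schrodingerDual_eq_sum hsa hsb, sum_add_distrib]

lemma isBounded_schrodingerDual_sublevel [Nonempty ι] (ha : ∀ i, 0 < a i) (hb : ∀ j, 0 < b j)
    (hσ : ∀ i j, 0 < σ i j) (hsa : ∑ i, a i = 1) (hsb : ∑ j, b j = 1) (j₀ : κ) (M : ℝ) :
    Bornology.IsBounded
      {x : (ι → ℝ) × (κ → ℝ) | x.2 j₀ = 0 ∧ schrodingerDual a b σ x.1 x.2 ≤ M} := by
  obtain ⟨i₀⟩ := ‹Nonempty ι›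
  obtain ⟨K, hK⟩ := exists_mul_abs_add_le_schrodingerDual ha hb hσ hsa hsb
  obtain ⟨L, hL⟩ := Finite.exists_le fun ij : ι × κ => (M + K) / (a ij.1 * b ij.2)
  refine isBounded_iff_forall_norm_le.2 ⟨2 * L, fun x ⟨hx₀, hxM⟩ => ?_⟩
  have hsum : ∀ i j, |x.1 i + x.2 j| ≤ L := fun i j =>
    ((le_div_iff₀' (mul_pos (ha i) (hb j))).2 ((hK x.1 x.2 i j).trans (by linarith))).trans
      (hL (i, j))
  have hL₀ : 0 ≤ L := (abs_nonneg _).trans (hsum i₀ j₀)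
  refine norm_prod_le_iff.2 ⟨(pi_norm_le_iff_of_nonneg (by linarith)).2 fun i => ?_,
    (pi_norm_le_iff_of_nonneg (by linarith)).2 fun j => ?_⟩
  · simpa [hx₀] using (hsum i j₀).trans (by linarith)
  · have hsub : x.2 j = (x.1 i₀ + x.2 j) - (x.1 i₀ + x.2 j₀) := by rw [hx₀]; ring
    rw [Real.norm_eq_abs, hsub]
    exact (abs_sub _ _).trans (by linarith [hsum i₀ j, hsum i₀ j₀])

lemma continuous_schrodingerDual :
    Continuous fun x : (ι → ℝ) × (κ → ℝ) => schrodingerDual a b σ x.1 x.2 := by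
  unfold schrodingerDual
  fun_prop

lemma exists_forall_schrodingerDual_le [Nonempty ι] [Nonempty κ] (ha : ∀ i, 0 < a i)
    (hb : ∀ j, 0 < b j) (hσ : ∀ i j, 0 < σ i j) (hsa : ∑ i, a i = 1) (hsb : ∑ j, b j = 1) :
    ∃ p q, ∀ p' q', schrodingerDual a b σ p q ≤ schrodingerDual a b σ p' q' := by
  obtain ⟨j₀⟩ := ‹Nonempty κ›
  set M := schrodingerDual a b σ 0 0
  set S := {x : (ι → ℝ) × (κ → ℝ) | x.2 j₀ = 0 ∧ schrodingerDual a b σ x.1 x.2 ≤ M}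
  have hS : IsCompact S :=
    Metric.isCompact_of_isClosed_isBounded
      ((isClosed_eq (by fun_prop) continuous_const).inter
        (isClosed_le continuous_schrodingerDual continuous_const))
      (isBounded_schrodingerDual_sublevel ha hb hσ hsa hsb j₀ M)
  have h₀ : (0 : (ι → ℝ) × (κ → ℝ)) ∈ S := ⟨rfl, le_rfl⟩
  obtain ⟨x, -, hx⟩ := hS.exists_isMinOn ⟨0, h₀⟩ continuous_schrodingerDual.continuousOn
  refine ⟨x.1, x.2, fun p q => ?_⟩
  have hshift := schrodingerDual_shift (σ := σ) (hsa.trans hsb.symm) p q (q j₀)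
  by_cases hq : schrodingerDual a b σ p q ≤ M
  · have hmem : ((fun i => p i + q j₀), (fun j => q j - q j₀)) ∈ S :=
      ⟨sub_self _, hshift.le.trans hq⟩
    exact (hx hmem).trans hshift.le
  · exact (hx h₀).trans (not_le.1 hq).le

end

section

open Real Finset InformationTheory

def gibbsPlan {ι κ : Type*} (σ : ι → κ → ℝ) (p : ι → ℝ) (q : κ → ℝ) : ι → κ → ℝ :=
  fun i j => σ i j * exp (p i + q j)

variable {n m : ℕ} {a : Fin n → ℝ} {b : Fin m → ℝ} {σ : Fin n → Fin m → ℝ}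

lemma isCoupling_gibbsPlan (hσ : ∀ i j, 0 < σ i j) {p : Fin n → ℝ} {q : Fin m → ℝ}
    (hrow : ∀ i, a i = ∑ j, σ i j * exp (p i + q j))
    (hcol : ∀ j, b j = ∑ i, σ i j * exp (p i + q j)) :
    IsCoupling a b (gibbsPlan σ p q) :=
  ⟨fun i j => (mul_pos (hσ i j) (exp_pos _)).le, fun i => (hrow i).symm, fun j => (hcol j).symm⟩

lemma IsCoupling.sum_sum_mul_add {P : Fin n → Fin m → ℝ} (hP : IsCoupling a b P)
    (p : Fin n → ℝ) (q : Fin m → ℝ) :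
    ∑ i, ∑ j, P i j * (p i + q j) = ∑ i, a i * p i + ∑ j, b j * q j := by
  simp only [mul_add, sum_add_distrib, ← sum_mul, hP.2.1]
  rw [sum_comm]
  simp only [← sum_mul, hP.2.2]

lemma dEnt_eq_sum_mul_klFun_add (hσ : ∀ i j, 0 < σ i j) {p : Fin n → ℝ}
    {q : Fin m → ℝ} (hR : IsCoupling a b (gibbsPlan σ p q)) {P : Fin n → Fin m → ℝ}
    (hP : IsCoupling a b P) :
    dEnt P σ = ∑ i, ∑ j, gibbsPlan σ p q i j * klFun (P i j / gibbsPlan σ p q i j)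
      + (∑ i, a i * p i + ∑ j, b j * q j) := by
  have hterm : ∀ i j, P i j * log (P i j / σ i j) =
      gibbsPlan σ p q i j * klFun (P i j / gibbsPlan σ p q i j) + P i j * (p i + q j)
        + (P i j - gibbsPlan σ p q i j) := by
    intro i j
    have hR_pos : 0 < gibbsPlan σ p q i j := mul_pos (hσ i j) (exp_pos _)
    rw [mul_klFun_div hR_pos.ne']
    rcases (hP.1 i j).eq_or_lt with hzero | hpos
    · simp [← hzero]
    · rw [log_div hpos.ne' hR_pos.ne', log_div hpos.ne' (hσ i j).ne', gibbsPlan,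
        log_mul (hσ i j).ne' (exp_pos _).ne', log_exp]
      ring
  have hmass : ∑ i, ∑ j, (P i j - gibbsPlan σ p q i j) = 0 := by
    simp only [sum_sub_distrib, hP.2.1, hR.2.1, sub_self, sum_const_zero]
  rw [dEnt]
  simp only [hterm, sum_add_distrib, hmass, hP.sum_sum_mul_add, add_zero]

lemma dEnt_gibbsPlan_lt (hσ : ∀ i j, 0 < σ i j) {p : Fin n → ℝ} {q : Fin m → ℝ}
    (hR : IsCoupling a b (gibbsPlan σ p q)) {P : Fin n → Fin m → ℝ} (hP : IsCoupling a b P)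
    (hne : P ≠ gibbsPlan σ p q) :
    dEnt (gibbsPlan σ p q) σ < dEnt P σ := by
  have hR_pos : ∀ i j, 0 < gibbsPlan σ p q i j := fun i j => mul_pos (hσ i j) (exp_pos _)
  have hratio_nonneg : ∀ i j, 0 ≤ P i j / gibbsPlan σ p q i j := fun i j =>
    div_nonneg (hP.1 i j) (hR_pos i j).le
  have hterm_nonneg : ∀ i j, 0 ≤ gibbsPlan σ p q i j * klFun (P i j / gibbsPlan σ p q i j) :=
    fun i j => mul_nonneg (hR_pos i j).le (klFun_nonneg (hratio_nonneg i j))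
  obtain ⟨i₀, j₀, hij⟩ : ∃ i j, P i j ≠ gibbsPlan σ p q i j := by
    by_contra! h
    exact hne (funext₂ h)
  have hterm_pos : 0 < gibbsPlan σ p q i₀ j₀ * klFun (P i₀ j₀ / gibbsPlan σ p q i₀ j₀) := by
    refine mul_pos (hR_pos i₀ j₀) ((klFun_nonneg (hratio_nonneg i₀ j₀)).lt_of_ne' ?_)
    rwa [Ne, klFun_eq_zero_iff (hratio_nonneg i₀ j₀), div_eq_one_iff_eq (hR_pos i₀ j₀).ne']
  rw [dEnt_eq_sum_mul_klFun_add hσ hR hR, dEnt_eq_sum_mul_klFun_add hσ hR hP]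
  simp only [div_self (hR_pos _ _).ne', klFun_one, mul_zero, sum_const_zero, zero_add]
  exact lt_add_of_pos_left _ <| sum_pos' (fun i _ => sum_nonneg fun j _ => hterm_nonneg i j)
    ⟨i₀, mem_univ _, sum_pos' (fun j _ => hterm_nonneg i₀ j) ⟨j₀, mem_univ _, hterm_pos⟩⟩

lemma exists_shift_of_isCoupling_gibbsPlan [Nonempty (Fin n)] [Nonempty (Fin m)]
    (hσ : ∀ i j, 0 < σ i j) {p p' : Fin n → ℝ} {q q' : Fin m → ℝ}
    (hR : IsCoupling a b (gibbsPlan σ p q)) (hR' : IsCoupling a b (gibbsPlan σ p' q')) :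
    ∃ r, (∀ i, p' i = p i + r) ∧ ∀ j, q' j = q j - r := by
  have heq : gibbsPlan σ p' q' = gibbsPlan σ p q := by
    by_contra hne
    linarith [dEnt_gibbsPlan_lt hσ hR hR' hne, dEnt_gibbsPlan_lt hσ hR' hR (Ne.symm hne)]
  exact exists_shift_of_add_eq fun i j =>
    exp_injective (mul_left_cancel₀ (hσ i j).ne' (congrFun₂ heq i j))

end

/-- the discrete Schrödinger system admits a solution `(p,q)`, unique
up to the shift `(p,q) ↦ (p + r𝟏, q - r𝟏)`, and `π* = (σ_{ij} exp(p_i+q_j))` is the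
unique minimizer of `H(·|σ)` over couplings of `μ` and `ν`. -/
theorem discrete_schrodinger_system {n m : ℕ} (hn : 0 < n) (hm : 0 < m)
    (a : Fin n → ℝ) (b : Fin m → ℝ) (σ : Fin n → Fin m → ℝ)
    (ha : ∀ i, 0 < a i) (hb : ∀ j, 0 < b j) (hσ : ∀ i j, 0 < σ i j)
    (hsa : ∑ i, a i = 1) (hsb : ∑ j, b j = 1) :
    ∃ p : Fin n → ℝ, ∃ q : Fin m → ℝ,
      (∀ i, a i = ∑ j, σ i j * Real.exp (p i + q j)) ∧
      (∀ j, b j = ∑ i, σ i j * Real.exp (p i + q j)) ∧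
      (∀ p' : Fin n → ℝ, ∀ q' : Fin m → ℝ,
        (∀ i, a i = ∑ j, σ i j * Real.exp (p' i + q' j)) →
        (∀ j, b j = ∑ i, σ i j * Real.exp (p' i + q' j)) →
        ∃ r : ℝ, (∀ i, p' i = p i + r) ∧ (∀ j, q' j = q j - r)) ∧
      IsCoupling a b (fun i j => σ i j * Real.exp (p i + q j)) ∧
      (∀ π : Fin n → Fin m → ℝ, IsCoupling a b π →
        π ≠ (fun i j => σ i j * Real.exp (p i + q j)) →
        dEnt (fun i j => σ i j * Real.exp (p i + q j)) σ < dEnt π σ) := by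
  have : Nonempty (Fin n) := Fin.pos_iff_nonempty.1 hn
  have : Nonempty (Fin m) := Fin.pos_iff_nonempty.1 hm
  obtain ⟨p, q, hmin⟩ := exists_forall_schrodingerDual_le ha hb hσ hsa hsb
  have hrow := eq_rowSum_of_forall_schrodingerDual_le ha hσ hmin
  have hcol := eq_colSum_of_forall_schrodingerDual_le hb hσ hmin
  have hR := isCoupling_gibbsPlan hσ hrow hcol
  refine ⟨p, q, hrow, hcol, fun p' q' hrow' hcol' => ?_, hR, fun π hπ hne => ?_⟩
  · exact exists_shift_of_isCoupling_gibbsPlan hσ hR (isCoupling_gibbsPlan hσ hrow' hcol')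
  · exact dEnt_gibbsPlan_lt hσ hR hπ hne
end
end

section
/- Let u ∈ ℝ^n, v ∈ ℝ^m, and suppose u' ∈ ℝ^n, v' ∈ ℝ^m satisfy u'_k = (1-1/λ)Σ_i p_{ki}u_i - (1/λ)Σ_j q_{kj}v_j and v'_l = -(1/λ)Σ_i r_{li}u_i + (1-1/λ)Σ_j s_{lj}v_j, where λ > 2 and the matrices P=(p_{ki}), Q=(q_{kj}), R=(r_{li}), S=(s_{lj}) are row-stochastic with all entries ≥ 1/η for some η > 2. Then, writing ‖(u,v)‖_{l∞_⊕} = max{max_i u_i + max_j v_j, -(min_i u_i + min_j v_j)} assumed nonnegative, one has ‖(u',v')‖_{l∞_⊕} ≤ (1 - 2/max{λ,η})‖(u,v)‖_{l∞_⊕}. -/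
/-! An average of `u` with all weights `≥ 1/η` lies at least a `1/η`-fraction of the range of `u`
away from each of its extremes. Each entry of `u'` and `v'` combines two such averages, so
`max u' + max v' ≤ (1 - 1/λ - 1/η) s + (1/η - 1/λ) t` and symmetrically for the minima, where
`s = max u + max v ≥ t = min u + min v`. Since `t ≤ s`, both `s` and `t` lie in `[-N, N]` for
`N = ‖(u,v)‖`, so both quantities are at most `(1 - 1/λ - 1/η + |1/η - 1/λ|) N = (1 - 2/max{λ,η}) N`. -/

noncomputable section

/-- The `l∞_⊕` quantity `max{max u + max v, -(min u + min v)}`. -/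
def nInfOplus {n m : ℕ} (u : Fin n → ℝ) (v : Fin m → ℝ) : ℝ :=
  max ((⨆ i, u i) + (⨆ j, v j)) (-((⨅ i, u i) + (⨅ j, v j)))

open Finset

section WeightedSum

variable {ι : Type*} [Fintype ι] {w u : ι → ℝ} {c M : ℝ}

theorem sum_mul_le_of_le_weight (hc : 0 ≤ c) (hw : ∀ i, c ≤ w i) (hs : ∑ i, w i = 1)
    (hM : ∀ i, u i ≤ M) (i₀ : ι) : ∑ i, w i * u i ≤ c * u i₀ + (1 - c) * M := by
  have hshift : ∑ i, w i * u i - M = ∑ i, w i * (u i - M) := by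
    simp only [mul_sub, sum_sub_distrib, ← sum_mul, hs, one_mul]
  have hnonpos : ∀ i, w i * (u i - M) ≤ 0 := fun i =>
    mul_nonpos_of_nonneg_of_nonpos (hc.trans (hw i)) (sub_nonpos.2 (hM i))
  have hsingle : ∑ i, w i * (u i - M) ≤ w i₀ * (u i₀ - M) := by
    classical
    rw [← add_sum_erase _ _ (mem_univ i₀)]
    linarith [sum_nonpos fun i (_ : i ∈ univ.erase i₀) => hnonpos i]
  have hweight : w i₀ * (u i₀ - M) ≤ c * (u i₀ - M) :=
    mul_le_mul_of_nonpos_right (hw i₀) (sub_nonpos.2 (hM i₀))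
  linarith

theorem le_sum_mul_of_le_weight (hc : 0 ≤ c) (hw : ∀ i, c ≤ w i) (hs : ∑ i, w i = 1)
    (hM : ∀ i, M ≤ u i) (i₀ : ι) : c * u i₀ + (1 - c) * M ≤ ∑ i, w i * u i := by
  have h := sum_mul_le_of_le_weight (u := -u) (M := -M) hc hw hs (fun i => neg_le_neg (hM i)) i₀
  simp only [Pi.neg_apply, mul_neg, sum_neg_distrib] at h
  linarith

variable [Nonempty ι]

theorem sum_mul_le_iInf_iSup (hc : 0 ≤ c) (hw : ∀ i, c ≤ w i) (hs : ∑ i, w i = 1) :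
    ∑ i, w i * u i ≤ c * (⨅ i, u i) + (1 - c) * ⨆ i, u i := by
  obtain ⟨i₀, hi₀⟩ := exists_eq_ciInf_of_finite (f := u)
  rw [← hi₀]
  exact sum_mul_le_of_le_weight hc hw hs (le_ciSup (Finite.bddAbove_range u)) i₀

theorem iSup_iInf_le_sum_mul (hc : 0 ≤ c) (hw : ∀ i, c ≤ w i) (hs : ∑ i, w i = 1) :
    c * (⨆ i, u i) + (1 - c) * (⨅ i, u i) ≤ ∑ i, w i * u i := by
  obtain ⟨i₀, hi₀⟩ := exists_eq_ciSup_of_finite (f := u)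
  rw [← hi₀]
  exact le_sum_mul_of_le_weight hc hw hs (ciInf_le (Finite.bddBelow_range u)) i₀

end WeightedSum

section Update

variable {ι κ : Type*} [Fintype ι] [Fintype κ] [Nonempty ι] [Nonempty κ]
  {w : ι → ℝ} {w' : κ → ℝ} {u : ι → ℝ} {v : κ → ℝ} {p c : ℝ}

theorem affine_update_le (hp : 0 ≤ p) (hp1 : p ≤ 1) (hc : 0 ≤ c)
    (hw : ∀ i, c ≤ w i) (hws : ∑ i, w i = 1) (hw' : ∀ j, c ≤ w' j) (hws' : ∑ j, w' j = 1) :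
    (1 - p) * ∑ i, w i * u i - p * ∑ j, w' j * v j ≤
      (1 - p) * (c * (⨅ i, u i) + (1 - c) * ⨆ i, u i)
        - p * (c * (⨆ j, v j) + (1 - c) * ⨅ j, v j) :=
  sub_le_sub (mul_le_mul_of_nonneg_left (sum_mul_le_iInf_iSup hc hw hws) (sub_nonneg.2 hp1))
    (mul_le_mul_of_nonneg_left (iSup_iInf_le_sum_mul hc hw' hws') hp)

theorem le_affine_update (hp : 0 ≤ p) (hp1 : p ≤ 1) (hc : 0 ≤ c)
    (hw : ∀ i, c ≤ w i) (hws : ∑ i, w i = 1) (hw' : ∀ j, c ≤ w' j) (hws' : ∑ j, w' j = 1) :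
    (1 - p) * (c * (⨆ i, u i) + (1 - c) * ⨅ i, u i)
        - p * (c * (⨅ j, v j) + (1 - c) * ⨆ j, v j) ≤
      (1 - p) * ∑ i, w i * u i - p * ∑ j, w' j * v j :=
  sub_le_sub (mul_le_mul_of_nonneg_left (iSup_iInf_le_sum_mul hc hw hws) (sub_nonneg.2 hp1))
    (mul_le_mul_of_nonneg_left (sum_mul_le_iInf_iSup hc hw' hws') hp)

end Update

section PairUpdate

variable {ι κ ι' κ' : Type*} [Fintype ι] [Fintype κ] [Nonempty ι] [Nonempty κ]
  [Nonempty ι'] [Nonempty κ'] {u : ι → ℝ} {v : κ → ℝ} {u' : ι' → ℝ} {v' : κ' → ℝ}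
  {P : ι' → ι → ℝ} {Q : ι' → κ → ℝ} {R : κ' → ι → ℝ} {S : κ' → κ → ℝ} {p c : ℝ}

theorem iSup_add_iSup_le_of_update (hp : 0 ≤ p) (hp1 : p ≤ 1) (hc : 0 ≤ c)
    (hP : (∀ k i, c ≤ P k i) ∧ ∀ k, ∑ i, P k i = 1)
    (hQ : (∀ k j, c ≤ Q k j) ∧ ∀ k, ∑ j, Q k j = 1)
    (hR : (∀ l i, c ≤ R l i) ∧ ∀ l, ∑ i, R l i = 1)
    (hS : (∀ l j, c ≤ S l j) ∧ ∀ l, ∑ j, S l j = 1)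
    (hu' : ∀ k, u' k = (1 - p) * ∑ i, P k i * u i - p * ∑ j, Q k j * v j)
    (hv' : ∀ l, v' l = -p * ∑ i, R l i * u i + (1 - p) * ∑ j, S l j * v j) :
    (⨆ k, u' k) + (⨆ l, v' l) ≤
      (1 - p - c) * ((⨆ i, u i) + ⨆ j, v j) + (c - p) * ((⨅ i, u i) + ⨅ j, v j) := by
  have hu'le := ciSup_le fun k => (hu' k).trans_le <|
    affine_update_le hp hp1 hc (hP.1 k) (hP.2 k) (hQ.1 k) (hQ.2 k)
  have hv'le := ciSup_le fun l => (hv' l).trans_le <| (le_of_eq (by ring)).trans <|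
    affine_update_le hp hp1 hc (hS.1 l) (hS.2 l) (hR.1 l) (hR.2 l)
  linarith

theorem le_iInf_add_iInf_of_update (hp : 0 ≤ p) (hp1 : p ≤ 1) (hc : 0 ≤ c)
    (hP : (∀ k i, c ≤ P k i) ∧ ∀ k, ∑ i, P k i = 1)
    (hQ : (∀ k j, c ≤ Q k j) ∧ ∀ k, ∑ j, Q k j = 1)
    (hR : (∀ l i, c ≤ R l i) ∧ ∀ l, ∑ i, R l i = 1)
    (hS : (∀ l j, c ≤ S l j) ∧ ∀ l, ∑ j, S l j = 1)
    (hu' : ∀ k, u' k = (1 - p) * ∑ i, P k i * u i - p * ∑ j, Q k j * v j)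
    (hv' : ∀ l, v' l = -p * ∑ i, R l i * u i + (1 - p) * ∑ j, S l j * v j) :
    (1 - p - c) * ((⨅ i, u i) + ⨅ j, v j) + (c - p) * ((⨆ i, u i) + ⨆ j, v j) ≤
      (⨅ k, u' k) + (⨅ l, v' l) := by
  have hu'ge := le_ciInf fun k => (le_affine_update hp hp1 hc (hP.1 k) (hP.2 k) (hQ.1 k)
    (hQ.2 k)).trans_eq (hu' k).symm
  have hv'ge := le_ciInf fun l => (le_affine_update hp hp1 hc (hS.1 l) (hS.2 l) (hR.1 l)
    (hR.2 l)).trans <| (le_of_eq (by ring)).trans_eq (hv' l).symm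
  linarith

end PairUpdate

theorem mul_add_mul_le_mul_max {A B s t : ℝ} (hA : 0 ≤ A) (hts : t ≤ s) :
    A * s + B * t ≤ (A + |B|) * max s (-t) := by
  have hs : A * s ≤ A * max s (-t) := mul_le_mul_of_nonneg_left (le_max_left _ _) hA
  have ht : B * t ≤ |B| * max s (-t) := by
    rcases le_total 0 B with hB | hB
    · rw [abs_of_nonneg hB]
      exact mul_le_mul_of_nonneg_left (hts.trans (le_max_left _ _)) hB
    · rw [abs_of_nonpos hB, ← neg_mul_neg]
      exact mul_le_mul_of_nonneg_left (le_max_right _ _) (neg_nonneg.2 hB)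
  linarith

theorem nInfOplus_le_mul_of_bounds {n m n' m' : ℕ} [Nonempty (Fin n)] [Nonempty (Fin m)]
    {u : Fin n → ℝ} {v : Fin m → ℝ} {u' : Fin n' → ℝ} {v' : Fin m' → ℝ} {A B : ℝ} (hA : 0 ≤ A)
    (hsup : (⨆ k, u' k) + (⨆ l, v' l) ≤ A * ((⨆ i, u i) + ⨆ j, v j) + B * ((⨅ i, u i) + ⨅ j, v j))
    (hinf : A * ((⨅ i, u i) + ⨅ j, v j) + B * ((⨆ i, u i) + ⨆ j, v j) ≤ (⨅ k, u' k) + ⨅ l, v' l) :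
    nInfOplus u' v' ≤ (A + |B|) * nInfOplus u v := by
  have hts : (⨅ i, u i) + (⨅ j, v j) ≤ (⨆ i, u i) + ⨆ j, v j :=
    add_le_add (ciInf_le_ciSup (Finite.bddBelow_range u) (Finite.bddAbove_range u))
      (ciInf_le_ciSup (Finite.bddBelow_range v) (Finite.bddAbove_range v))
  refine max_le (hsup.trans (mul_add_mul_le_mul_max hA hts)) ?_
  calc -((⨅ k, u' k) + ⨅ l, v' l)
      ≤ A * -((⨅ i, u i) + ⨅ j, v j) + B * -((⨆ i, u i) + ⨆ j, v j) := by linarith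
    _ ≤ (A + |B|) * nInfOplus u v := (mul_add_mul_le_mul_max hA (neg_le_neg hts)).trans_eq <| by
      rw [neg_neg, max_comm, nInfOplus]

theorem one_sub_div_sub_div_add_abs_eq {a b : ℝ} (ha : 0 < a) (hb : 0 < b) :
    1 - 1 / a - 1 / b + |1 / b - 1 / a| = 1 - 2 / max a b := by
  rcases le_total a b with hab | hba
  · rw [max_eq_right hab, abs_of_nonpos (sub_nonpos.2 (one_div_le_one_div_of_le ha hab))]
    ring
  · rw [max_eq_left hba, abs_of_nonneg (sub_nonneg.2 (one_div_le_one_div_of_le hb hba))]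
    ring

theorem sinkhorn_contraction_estimate_general {n m : ℕ} (hn : 0 < n) (hm : 0 < m)
    (u u' : Fin n → ℝ) (v v' : Fin m → ℝ)
    (lam η : ℝ) (hlam : 2 < lam) (hη : 2 < η)
    (P : Fin n → Fin n → ℝ) (Q : Fin n → Fin m → ℝ)
    (R : Fin m → Fin n → ℝ) (S : Fin m → Fin m → ℝ)
    (hP : (∀ k i, 1 / η ≤ P k i) ∧ ∀ k, ∑ i, P k i = 1)
    (hQ : (∀ k j, 1 / η ≤ Q k j) ∧ ∀ k, ∑ j, Q k j = 1)
    (hR : (∀ l i, 1 / η ≤ R l i) ∧ ∀ l, ∑ i, R l i = 1)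
    (hS : (∀ l j, 1 / η ≤ S l j) ∧ ∀ l, ∑ j, S l j = 1)
    (hu' : ∀ k, u' k = (1 - 1 / lam) * ∑ i, P k i * u i - (1 / lam) * ∑ j, Q k j * v j)
    (hv' : ∀ l, v' l = -(1 / lam) * ∑ i, R l i * u i + (1 - 1 / lam) * ∑ j, S l j * v j) :
    nInfOplus u' v' ≤ (1 - 2 / max lam η) * nInfOplus u v := by
  have : Nonempty (Fin n) := Fin.pos_iff_nonempty.mp hn
  have : Nonempty (Fin m) := Fin.pos_iff_nonempty.mp hm
  have hp : 0 ≤ 1 / lam := one_div_nonneg.2 (by linarith)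
  have hc : 0 ≤ 1 / η := one_div_nonneg.2 (by linarith)
  have hA : 0 ≤ 1 - 1 / lam - 1 / η := by
    have hp2 : 1 / lam < 1 / 2 := one_div_lt_one_div_of_lt two_pos hlam
    have hc2 : 1 / η < 1 / 2 := one_div_lt_one_div_of_lt two_pos hη
    linarith
  rw [← one_sub_div_sub_div_add_abs_eq (by linarith) (by linarith)]
  exact nInfOplus_le_mul_of_bounds hA
    (iSup_add_iSup_le_of_update hp (by linarith) hc hP hQ hR hS hu' hv')
    (le_iInf_add_iInf_of_update hp (by linarith) hc hP hQ hR hS hu' hv')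

/-- the Sinkhorn-type linear update with row-stochastic matrices with
entries `≥ 1/η` contracts the `l∞_⊕` quantity by the factor `1 - 2/max{λ,η}`. -/
theorem sinkhorn_contraction_estimate {n m : ℕ} (hn : 0 < n) (hm : 0 < m)
    (u u' : Fin n → ℝ) (v v' : Fin m → ℝ)
    (lam η : ℝ) (hlam : 2 < lam) (hη : 2 < η)
    (P : Fin n → Fin n → ℝ) (Q : Fin n → Fin m → ℝ)
    (R : Fin m → Fin n → ℝ) (S : Fin m → Fin m → ℝ)
    (hP : (∀ k i, 1 / η ≤ P k i) ∧ ∀ k, ∑ i, P k i = 1)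
    (hQ : (∀ k j, 1 / η ≤ Q k j) ∧ ∀ k, ∑ j, Q k j = 1)
    (hR : (∀ l i, 1 / η ≤ R l i) ∧ ∀ l, ∑ i, R l i = 1)
    (hS : (∀ l j, 1 / η ≤ S l j) ∧ ∀ l, ∑ j, S l j = 1)
    (hu' : ∀ k, u' k = (1 - 1 / lam) * ∑ i, P k i * u i - (1 / lam) * ∑ j, Q k j * v j)
    (hv' : ∀ l, v' l = -(1 / lam) * ∑ i, R l i * u i + (1 - 1 / lam) * ∑ j, S l j * v j)
    (hnn : 0 ≤ nInfOplus u v) :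
    nInfOplus u' v' ≤ (1 - 2 / max lam η) * nInfOplus u v :=
  sinkhorn_contraction_estimate_general hn hm u u' v v' lam η hlam hη P Q R S hP hQ hR hS hu' hv'

end
end
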